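/- Let p ≥ (ln n)/n and set f(n) = np/ln n. With probability tending to 1 as n → ∞, G ~ G(n,p) satisfies: every subset U ⊆ V with |U| ≤ n·(ln ln n)/(ln n) spans at most 100·|U|·f(n)·ln ln n edges. -/

import Mathlib

open MeasureTheory Filter

/-- The Erdős–Rényi random graph measure `G(n,p)`: each potential edge (an element of
`Sym2 (Fin n)`) is present independently with probability `p`. -/
noncomputable def gnp (n : ℕ) (p : ENNReal) (hp : p ≤ 1) :
    Measure (Sym2 (Fin n) → Bool) :=
  Measure.pi fun _ => (PMF.bernoulli p.toNNReal (by simpa using ENNReal.toNNReal_mono ENNReal.one_ne_top hp)).toMeasure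

/-- The graph determined by an outcome `ω` of the edge indicators. -/
def graphOf {n : ℕ} (ω : Sym2 (Fin n) → Bool) : SimpleGraph (Fin n) :=
  SimpleGraph.fromEdgeSet {e | ω e = true}


/-- The number of edges of `G` spanned by the vertex set `U`. -/
noncomputable def edgesIn {V : Type*} (G : SimpleGraph V) (U : Set V) : ℕ :=
  {e ∈ G.edgeSet | ∀ x ∈ e, x ∈ U}.ncard

/-!
A set `U` with `j` vertices spanning more than `x_j = 100 j f(n) ln ln n` edges contains
`k = ⌊x_j⌋ + 1` of its at most `j²` vertex pairs as edges, which has probability at most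
`C(j², k) pᵏ ≤ (e j² p / k)ᵏ`. Since `f(n) ≥ 1`, `k ≥ 100 j ln ln n ≥ j`, and with
`r = j ln n / (n ln ln n) ≤ 1` the union bound over the `C(n, j) ≤ (e n / j)ʲ` sets of size `j`
is at most `(e n / j)ʲ ((e / 100) r)ᵏ ≤ (e ln n)ʲ (e / 100)ᵏ ≤ (ln n)^(-200 j)`.
Summing over `j ≥ 1` leaves `2 (ln n)^(-200) → 0`.
-/

open Finset Real
open scoped ENNReal Topology

lemma Nat.choose_mul_pow_le_exp_one_mul_div_pow (m k : ℕ) {x : ℝ} (hx : 0 ≤ x) :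
    (m.choose k : ℝ) * x ^ k ≤ (exp 1 * m * x / k) ^ k := by
  rcases k.eq_zero_or_pos with rfl | hk
  · simp
  have hk' : (0 : ℝ) < k := by exact_mod_cast hk
  calc (m.choose k : ℝ) * x ^ k ≤ (m : ℝ) ^ k / k.factorial * x ^ k := by
        gcongr; exact Nat.choose_le_pow_div k m
    _ = (m * x / k) ^ k * ((k : ℝ) ^ k / k.factorial) := by
        rw [div_pow, mul_pow]; field_simp
    _ ≤ (m * x / k) ^ k * exp k := by
        gcongr; exact pow_div_factorial_le_exp _ hk'.le k
    _ = (exp 1 * m * x / k) ^ k := by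
        rw [← exp_one_pow, mul_comm, ← mul_pow]; ring

lemma Finset.card_sym2_le_sq {α : Type*} [DecidableEq α] (s : Finset α) : #s.sym2 ≤ #s ^ 2 := by
  simpa [card_sym2] using Nat.choose_le_sub_pow (#s + 1) 2

lemma tendsto_measure_one_of_tendsto_measure_compl {ι : Type*} {l : Filter ι} {Ω : ι → Type*}
    [∀ i, MeasurableSpace (Ω i)] {μ : ∀ i, Measure (Ω i)} [∀ i, IsProbabilityMeasure (μ i)]
    {s : ∀ i, Set (Ω i)} (h : Tendsto (fun i => μ i (s i)ᶜ) l (𝓝 0)) :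
    Tendsto (fun i => μ i (s i)) l (𝓝 1) := by
  have hlower : Tendsto (fun i => 1 - μ i (s i)ᶜ) l (𝓝 1) := by
    simpa using ENNReal.Tendsto.sub tendsto_const_nhds h (Or.inl ENNReal.one_ne_top)
  refine tendsto_of_tendsto_of_tendsto_of_le_of_le hlower tendsto_const_nhds (fun i => ?_)
    (fun i => prob_le_one)
  simpa using measure_univ_le_add_compl (μ := μ i) (s i)

lemma ENNReal.sum_range_pow_succ_le_two_mul {y : ℝ≥0∞} (hy : y ≤ 2⁻¹) (n : ℕ) :
    ∑ i ∈ range n, y ^ (i + 1) ≤ 2 * y := by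
  have hy1 : y ≠ ⊤ := ne_top_of_le_ne_top (by simp) hy
  calc ∑ i ∈ range n, y ^ (i + 1) = y * ∑ i ∈ range n, y ^ i := by
        simp only [pow_succ', mul_sum]
    _ ≤ y * (1 - y)⁻¹ := by
        gcongr; exact (ENNReal.sum_le_tsum _).trans (ENNReal.tsum_geometric y).le
    _ ≤ y * 2 := by
        gcongr
        rw [ENNReal.inv_le_iff_inv_le, ENNReal.le_sub_iff_add_le_left hy1 ?_]
        · calc y + 2⁻¹ ≤ 2⁻¹ + 2⁻¹ := by gcongr
            _ = 1 := ENNReal.inv_two_add_inv_two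
        · exact hy.trans (by norm_num)
    _ = 2 * y := mul_comm _ _

section gnp

variable {n : ℕ} {p : ℝ≥0∞} (hp : p ≤ 1)

instance : IsProbabilityMeasure (gnp n p hp) := by
  unfold gnp; infer_instance

lemma gnp_forall_mem_eq_true (T : Finset (Sym2 (Fin n))) :
    gnp n p hp {ω | ∀ e ∈ T, ω e = true} = p ^ #T := by
  have hcyl : {ω : Sym2 (Fin n) → Bool | ∀ e ∈ T, ω e = true}
      = Set.univ.pi fun e => if e ∈ T then {true} else Set.univ := by
    ext ω; simp only [Set.mem_pi]; grind
  rw [hcyl, gnp, Measure.pi_pi]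
  simp_rw [apply_ite (PMF.toMeasure _), measure_univ]
  simp only [prod_ite_mem, univ_inter, prod_const]
  rw [PMF.toMeasure_apply_singleton _ _ (measurableSet_singleton _)]
  simp [PMF.bernoulli, ENNReal.coe_toNNReal (ne_top_of_le_ne_top ENNReal.one_ne_top hp)]

lemma edgesIn_graphOf_le (ω : Sym2 (Fin n) → Bool) (F : Finset (Fin n)) :
    edgesIn (graphOf ω) F ≤ #{e ∈ F.sym2 | ω e = true} := by
  rw [edgesIn, ← Set.ncard_coe_finset]
  refine Set.ncard_le_ncard (fun e he => ?_) (Set.toFinite _)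
  simp_all [graphOf, mem_sym2_iff]

lemma gnp_setOf_le_edgesIn_le (F : Finset (Fin n)) (k : ℕ) :
    gnp n p hp {ω | k ≤ edgesIn (graphOf ω) F} ≤ (#F.sym2).choose k * p ^ k := by
  have hcover : {ω | k ≤ edgesIn (graphOf ω) F}
      ⊆ ⋃ T ∈ F.sym2.powersetCard k, {ω | ∀ e ∈ T, ω e = true} := by
    intro ω hω
    obtain ⟨T, hT, hcard⟩ := exists_subset_card_eq (hω.trans (edgesIn_graphOf_le ω F))
    refine Set.mem_biUnion (mem_powersetCard.2 ⟨hT.trans (filter_subset _ _), hcard⟩) ?_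
    exact fun e he => (mem_filter.1 (hT he)).2
  calc gnp n p hp {ω | k ≤ edgesIn (graphOf ω) F}
      ≤ ∑ T ∈ F.sym2.powersetCard k, gnp n p hp {ω | ∀ e ∈ T, ω e = true} :=
        (measure_mono hcover).trans (measure_biUnion_finset_le _ _)
    _ = (#F.sym2).choose k * p ^ k := by
        rw [sum_congr rfl fun T hT => by rw [gnp_forall_mem_eq_true, (mem_powersetCard.1 hT).2],
          sum_const, card_powersetCard, nsmul_eq_mul]

end gnp

lemma exp_one_div_hundred_le_exp_neg_three : exp 1 / 100 ≤ exp (-3) := by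
  have h4 : exp 4 ≤ 100 :=
    calc exp 4 = exp 1 ^ 4 := by rw [exp_one_pow]; norm_num
      _ ≤ 2.72 ^ 4 := by gcongr; linarith [exp_one_lt_d9]
      _ ≤ 100 := by norm_num
  rw [div_le_iff₀ (by norm_num)]
  calc exp 1 = exp 4 * exp (-3) := by rw [← exp_add]; norm_num
    _ ≤ exp (-3) * 100 := by rw [mul_comm]; gcongr

lemma choose_mul_choose_mul_pow_le_exp {n j k m : ℕ} {q : ℝ} (hΛ : 1 ≤ log (log n)) (hj : 1 ≤ j)
    (hjs : (j : ℝ) ≤ n * log (log n) / log n) (hq : log n / n ≤ q) (hm : m ≤ j ^ 2)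
    (hk : 100 * j * (n * q / log n) * log (log n) ≤ k) :
    (n.choose j : ℝ) * (m.choose k * q ^ k) ≤ exp (-(200 * j * log (log n))) := by
  set L := log n
  set Λ := log L
  have hL : 1 < L := (log_pos_iff (log_natCast_nonneg n)).1 (by linarith)
  have hn : (0 : ℝ) < n := Nat.cast_pos.2 (Nat.pos_of_ne_zero fun h => by norm_num [L, h] at hL)
  have hj' : (0 : ℝ) < j := by exact_mod_cast hj
  have hq0 : 0 < q := (div_pos (by linarith) hn).trans_le hq
  set r := j * L / (n * Λ) with hr
  have hr0 : 0 ≤ r := by positivity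
  have hr1 : r ≤ 1 := by
    rw [div_le_one (by positivity)]; rwa [le_div_iff₀ (by linarith)] at hjs
  have hf : 1 ≤ n * q / L := by
    rwa [le_div_iff₀ (by linarith), one_mul, ← div_le_iff₀' hn]
  have hkΛ : 100 * j * Λ ≤ k := by nlinarith
  have hjk : j ≤ k := by exact_mod_cast (show (j : ℝ) ≤ k by nlinarith)
  have hbase : exp 1 * m * q / k ≤ exp 1 / 100 * r := by
    calc exp 1 * m * q / k ≤ exp 1 * j ^ 2 * q / (100 * j * (n * q / L) * Λ) := by
          gcongr; exact_mod_cast hm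
      _ = exp 1 / 100 * r := by
          rw [hr]; field_simp
  have hgain : exp 1 * n / j * r ≤ exp (1 + Λ) := by
    rw [exp_add, exp_log (by linarith)]
    calc exp 1 * n / j * r = exp 1 * L / Λ := by rw [hr]; field_simp
      _ ≤ exp 1 * L := div_le_self (by positivity) hΛ
  calc (n.choose j : ℝ) * (m.choose k * q ^ k)
      ≤ (exp 1 * n * 1 / j) ^ j * (exp 1 * m * q / k) ^ k := by
        gcongr
        · simpa using Nat.choose_mul_pow_le_exp_one_mul_div_pow n j zero_le_one
        · exact Nat.choose_mul_pow_le_exp_one_mul_div_pow m k hq0.le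
    _ ≤ (exp 1 * n / j) ^ j * (exp 1 / 100 * r) ^ k := by rw [mul_one]; gcongr
    _ ≤ (exp 1 * n / j) ^ j * ((exp 1 / 100) ^ k * r ^ j) := by
        rw [mul_pow]; gcongr _ * (_ * ?_); exact pow_le_pow_of_le_one hr0 hr1 hjk
    _ = (exp 1 * n / j * r) ^ j * (exp 1 / 100) ^ k := by ring
    _ ≤ exp (1 + Λ) ^ j * exp (-3) ^ k := by
        gcongr
        exact exp_one_div_hundred_le_exp_neg_three
    _ = exp (j * (1 + Λ) - 3 * k) := by
        rw [← exp_nat_mul, ← exp_nat_mul, ← exp_add]; ring_nf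
    _ ≤ exp (-(200 * j * Λ)) := by
        gcongr; nlinarith

lemma gnp_compl_le_union_bound {n : ℕ} {p : ℝ≥0∞} (hp : p ≤ 1) (s : ℝ) {x : ℕ → ℝ}
    (hx : ∀ j, 0 ≤ x j) :
    gnp n p hp {ω | ∀ U : Set (Fin n), (U.ncard : ℝ) ≤ s → (edgesIn (graphOf ω) U : ℝ) ≤ x U.ncard}ᶜ
      ≤ ∑ j ∈ range (n + 1), n.choose j •
          if (j : ℝ) ≤ s then ((j ^ 2).choose (⌊x j⌋₊ + 1) : ℝ≥0∞) * p ^ (⌊x j⌋₊ + 1) else 0 := by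
  classical
  calc _ ≤ ∑ F ∈ ({F | (#F : ℝ) ≤ s} : Finset (Finset (Fin n))),
          gnp n p hp {ω | ⌊x #F⌋₊ + 1 ≤ edgesIn (graphOf ω) F} := by
        refine (measure_mono fun ω hω => ?_).trans (measure_biUnion_finset_le _ _)
        simp only [Set.mem_compl_iff, Set.mem_ofPred_eq, not_forall, not_le] at hω
        obtain ⟨U, hUs, hUx⟩ := hω
        have hU : #U.toFinset = U.ncard := (Set.ncard_eq_toFinset_card' U).symm
        refine Set.mem_biUnion (x := U.toFinset) ?_ ?_
        · simpa [hU] using hUs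
        · rw [Set.mem_ofPred_eq, hU, Set.coe_toFinset]; exact (Nat.floor_lt (hx _)).2 hUx
    _ ≤ ∑ F : Finset (Fin n), if (#F : ℝ) ≤ s then
          ((#F ^ 2).choose (⌊x #F⌋₊ + 1) : ℝ≥0∞) * p ^ (⌊x #F⌋₊ + 1) else 0 := by
        rw [sum_filter]
        refine sum_le_sum fun F _ => ?_
        split_ifs
        · refine (gnp_setOf_le_edgesIn_le hp F _).trans ?_
          gcongr
          exact card_sym2_le_sq F
        · rfl
    _ = _ := by
        rw [← powerset_univ, sum_powerset_apply_card (fun j => if (j : ℝ) ≤ s then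
          ((j ^ 2).choose (⌊x j⌋₊ + 1) : ℝ≥0∞) * p ^ (⌊x j⌋₊ + 1) else 0), card_univ,
          Fintype.card_fin]

lemma gnp_compl_le_two_mul_exp {n : ℕ} {p : ℝ≥0∞} (hp : p ≤ 1)
    (hlb : ENNReal.ofReal (log n / n) ≤ p) (hΛ : 1 ≤ log (log n)) :
    gnp n p hp {ω | ∀ U : Set (Fin n), (U.ncard : ℝ) ≤ n * log (log n) / log n →
        (edgesIn (graphOf ω) U : ℝ) ≤ 100 * U.ncard * (n * p.toReal / log n) * log (log n)}ᶜ
      ≤ 2 * ENNReal.ofReal (exp (-(200 * log (log n)))) := by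
  set q := p.toReal
  set y := ENNReal.ofReal (exp (-(200 * log (log n))))
  have hpq : ENNReal.ofReal q = p := ENNReal.ofReal_toReal (ne_top_of_le_ne_top ENNReal.one_ne_top hp)
  have hq : log n / n ≤ q :=
    (ENNReal.ofReal_le_iff_le_toReal (ne_top_of_le_ne_top ENNReal.one_ne_top hp)).1 hlb
  have hy : y ≤ 2⁻¹ := by
    calc y ≤ ENNReal.ofReal (exp (-1)) := ENNReal.ofReal_le_ofReal (exp_le_exp.2 (by linarith))
      _ ≤ ENNReal.ofReal 2⁻¹ := by
          gcongr
          rw [exp_neg]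
          exact inv_anti₀ two_pos (by linarith [add_one_le_exp (1 : ℝ)])
      _ = 2⁻¹ := by rw [ENNReal.ofReal_inv_of_pos two_pos]; simp
  refine (gnp_compl_le_union_bound hp _
    (x := fun j => 100 * j * (n * q / log n) * log (log n))
    (fun j => mul_nonneg (by positivity) (by linarith))).trans ?_
  rw [sum_range_succ']
  simp only [ne_eq, OfNat.ofNat_ne_zero, not_false_eq_true, zero_pow, Nat.choose_zero_succ,
    Nat.cast_zero, zero_mul, ite_self, smul_zero, add_zero]
  refine (sum_le_sum fun j _ => ?_).trans (ENNReal.sum_range_pow_succ_le_two_mul hy n)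
  split_ifs with hjs
  · rw [← hpq, nsmul_eq_mul, ← ENNReal.ofReal_pow ENNReal.toReal_nonneg, ← ENNReal.ofReal_natCast,
      ← ENNReal.ofReal_natCast, ← ENNReal.ofReal_mul (by positivity),
      ← ENNReal.ofReal_mul (by positivity), ← ENNReal.ofReal_pow (exp_nonneg _), ← exp_nat_mul]
    refine ENNReal.ofReal_le_ofReal ((choose_mul_choose_mul_pow_le_exp hΛ j.succ_pos hjs hq le_rfl
      (by push_cast; exact (Nat.lt_floor_add_one _).le)).trans_eq ?_)
    push_cast; ring_nf
  · simp

/-- P3. Let `p ≥ (ln n)/n` and `f(n) = np/ln n`. Then w.h.p.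
`G ~ G(n,p)` is such that every `U` with `|U| ≤ n ln ln n / ln n` spans at most
`100 |U| f(n) ln ln n` edges. -/
theorem gnp_edges_in_small_sets (p : ℕ → ENNReal) (hp : ∀ n, p n ≤ 1)
    (hlb : ∀ n : ℕ, ENNReal.ofReal (Real.log n / n) ≤ p n) :
    Tendsto
      (fun n => gnp n (p n) (hp n)
        {ω | ∀ U : Set (Fin n),
          (U.ncard : ℝ) ≤ n * Real.log (Real.log n) / Real.log n →
          (edgesIn (graphOf ω) U : ℝ) ≤
            100 * U.ncard * (n * (p n).toReal / Real.log n) * Real.log (Real.log n)})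
      atTop (nhds 1) := by
  have hΛ : Tendsto (fun n : ℕ => log (log n)) atTop atTop :=
    tendsto_log_atTop.comp (tendsto_log_atTop.comp tendsto_natCast_atTop_atTop)
  have hbound : Tendsto (fun n : ℕ => 2 * ENNReal.ofReal (exp (-(200 * log (log n)))))
      atTop (𝓝 0) := by
    have hexp : Tendsto (fun n : ℕ => exp (-(200 * log (log n)))) atTop (𝓝 0) :=
      tendsto_exp_atBot.comp (tendsto_neg_atTop_atBot.comp (hΛ.const_mul_atTop (by norm_num)))
    simpa using ENNReal.Tendsto.const_mul (ENNReal.tendsto_ofReal hexp) (Or.inr ENNReal.ofNat_ne_top)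
  refine tendsto_measure_one_of_tendsto_measure_compl (μ := fun n => gnp n (p n) (hp n)) ?_
  exact tendsto_of_tendsto_of_tendsto_of_le_of_le' tendsto_const_nhds hbound
    (Eventually.of_forall fun n => zero_le)
    ((hΛ.eventually_ge_atTop 1).mono fun n hn => gnp_compl_le_two_mul_exp (hp n) (hlb n) hn)
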